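/- Let (V̲, P̲) and (V̄, P̄) be respectively a subsolution and a supersolution of the asymptotic system (i.e. families of C¹ functions on [0,∞) indexed by j ∈ ℤ satisfying, for all t > 0 and j ∈ ℤ, V̄_j'(t) ≥ −2α V̄_j(t) + β(P̄_j(t) + P̄_{j+1}(t)) and P̄_j'(t) ≥ f(P̄_j(t)) + α(V̄_j(t) + V̄_{j-1}(t)) − 2β P̄_j(t), with reversed inequalities for the subsolution), both locally bounded in time. If V̲_j(0) ≤ V̄_j(0) and P̲_j(0) ≤ P̄_j(0) for all j ∈ ℤ, then V̲_j(t) ≤ V̄_j(t) and P̲_j(t) ≤ P̄_j(t) for all t > 0 and j ∈ ℤ. If, in addition, the initial data are not identical, then V̲_j(t) < V̄_j(t) and P̲_j(t) < P̄_j(t) for all t > 0 and j ∈ ℤ. -/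

import Mathlib

/-!
The gaps `Vlo - Vhi`, `Plo - Phi` satisfy a cooperative system of differential inequalities on
the lattice `ℤ`: the couplings `α, β` are nonnegative and `f` is Lipschitz on the bounded range
of the solutions. A bound `M e^{2Kt}` on all gaps over `[0, T]` improves, by a barrier argument
for each single gap, to `(M / 2) e^{2Kt}`; local boundedness provides a first `M`, and iterating
gives the weak comparison although the lattice is infinite.

For strictness, each gap `u` of the supersolution over the subsolution satisfies
`u' + c u ≥ (positive coupling) · (neighbouring gaps) ≥ 0`, so `e^{ct} u` is nondecreasing, and
strictly increasing as soon as a neighbouring gap is positive. Strict order at a single site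
thus propagates to every site.
-/

open Set Filter

noncomputable section

/-- `C¹` regularity on `[0,∞)` for a pair of families of functions indexed by `ℤ`. -/
def AsympReg (V P : ℤ → ℝ → ℝ) : Prop :=
  ∀ j, ContDiffOn ℝ 1 (V j) (Ici 0) ∧ ContDiffOn ℝ 1 (P j) (Ici 0)

/-- A supersolution of the asymptotic system. -/
def AsympSuperSolution (α β : ℝ) (f : ℝ → ℝ) (V P : ℤ → ℝ → ℝ) : Prop :=
  AsympReg V P ∧
  ∀ j : ℤ, ∀ t : ℝ, 0 < t →
    -(2 * α) * V j t + β * (P j t + P (j + 1) t) ≤ deriv (V j) t ∧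
    f (P j t) + α * (V j t + V (j - 1) t) - 2 * β * P j t ≤ deriv (P j) t

/-- A subsolution of the asymptotic system. -/
def AsympSubSolution (α β : ℝ) (f : ℝ → ℝ) (V P : ℤ → ℝ → ℝ) : Prop :=
  AsympReg V P ∧
  ∀ j : ℤ, ∀ t : ℝ, 0 < t →
    deriv (V j) t ≤ -(2 * α) * V j t + β * (P j t + P (j + 1) t) ∧
    deriv (P j) t ≤ f (P j t) + α * (V j t + V (j - 1) t) - 2 * β * P j t

/-- Locally bounded in time, uniformly in `j`. -/
def AsympLocBdd (V P : ℤ → ℝ → ℝ) : Prop :=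
  ∀ T : ℝ, 0 < T → ∃ C : ℝ, ∀ j, ∀ t ∈ Icc (0:ℝ) T, |V j t| ≤ C ∧ |P j t| ≤ C

open Topology Real

theorem HasDerivAt.exp_mul_mul {u : ℝ → ℝ} {u' c t : ℝ} (hu : HasDerivAt u u' t) :
    HasDerivAt (fun s => Real.exp (c * s) * u s) (Real.exp (c * t) * (u' + c * u t)) t := by
  have h := ((hasDerivAt_id t).const_mul c).exp.mul hu
  simp only [id, mul_one] at h
  exact h.congr_deriv (by ring)

theorem image_le_of_deriv_nonpos_above {f f' : ℝ → ℝ} {a b c : ℝ}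
    (hf : ContinuousOn f (Icc a b)) (hf' : ∀ x ∈ Ioo a b, HasDerivAt f (f' x) x)
    (ha : f a ≤ c) (hc : ∀ x ∈ Ioo a b, c < f x → f' x ≤ 0) :
    ∀ x ∈ Icc a b, f x ≤ c := by
  intro x hx
  by_contra! hcx
  set S := Icc a x ∩ f ⁻¹' Iic c
  have hSc : IsClosed S :=
    (hf.mono (Icc_subset_Icc_right hx.2)).preimage_isClosed_of_isClosed isClosed_Icc isClosed_Iic
  have hSbdd : BddAbove S := bddAbove_Icc.mono inter_subset_left
  have hτS : sSup S ∈ S := hSc.csSup_mem ⟨a, ⟨le_rfl, hx.1⟩, ha⟩ hSbdd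
  set τ := sSup S
  -- `τ` is the last time before `x` with `f τ ≤ c`; after it `f` is above `c`, hence antitone
  have hτx : τ < x := lt_of_le_of_ne hτS.1.2 fun h => (not_le.2 hcx) (h ▸ hτS.2)
  have hgt : ∀ y ∈ Ioc τ x, c < f y := fun y hy => not_le.1 fun hy' =>
    (not_le.2 hy.1) (le_csSup hSbdd ⟨⟨hτS.1.1.trans hy.1.le, hy.2⟩, hy'⟩)
  have hsub : Ioo τ x ⊆ Ioo a b := fun y hy => ⟨hτS.1.1.trans_lt hy.1, hy.2.trans_le hx.2⟩
  have hanti : AntitoneOn f (Icc τ x) := by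
    refine antitoneOn_of_deriv_nonpos (convex_Icc τ x)
      (hf.mono (Icc_subset_Icc hτS.1.1 hx.2)) ?_ ?_
    · rw [interior_Icc]
      exact fun y hy => (hf' y (hsub hy)).differentiableAt.differentiableWithinAt
    · rw [interior_Icc]
      intro y hy
      rw [(hf' y (hsub hy)).deriv]
      exact hc y (hsub hy) (hgt y (Ioo_subset_Ioc_self hy))
  exact (not_le.2 hcx) ((hanti ⟨le_rfl, hτx.le⟩ ⟨hτx.le, le_rfl⟩ hτx.le).trans hτS.2)

theorem le_half_mul_exp_of_cooperative {ι : Type*} {z z' : ι → ℝ → ℝ} {a b K M : ℝ}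
    (hK : 0 ≤ K) (hM : 0 ≤ M) (hz : ∀ i, ContinuousOn (z i) (Icc a b))
    (hz' : ∀ i, ∀ t ∈ Ioo a b, HasDerivAt (z i) (z' i t) t)
    (hcoop : ∀ t ∈ Ioo a b, ∀ m, (∀ k, z k t ≤ m) → ∀ i, 0 < z i t → z' i t ≤ K * m)
    (ha : ∀ i, z i a ≤ 0) (hzM : ∀ i, ∀ t ∈ Icc a b, z i t ≤ M * exp (2 * K * t)) :
    ∀ i, ∀ t ∈ Icc a b, z i t ≤ M / 2 * exp (2 * K * t) := by
  have hweight : ∀ i t c, z i t ≤ c * exp (2 * K * t) ↔ exp (-(2 * K) * t) * z i t ≤ c :=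
    fun i t c => by rw [neg_mul, exp_neg, inv_mul_le_iff₀ (exp_pos _), mul_comm]
  intro i t ht
  rw [hweight]
  refine image_le_of_deriv_nonpos_above
    ((continuous_exp.comp (continuous_const_mul _)).continuousOn.mul (hz i))
    (fun t ht => (hz' i t ht).exp_mul_mul) ?_ (fun s hs hlt => ?_) t ht
  · exact (mul_nonpos_of_nonneg_of_nonpos (exp_pos _).le (ha i)).trans (by positivity)
  -- above the level `M / 2`, the damping `2 K z` of the weight beats the forcing `K m`
  have hzs : M / 2 * exp (2 * K * s) < z i s :=
    not_le.1 fun h => (not_le.2 hlt) ((hweight i s _).1 h)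
  have hbound := hcoop s hs (M * exp (2 * K * s)) (fun k => hzM k s (Ioo_subset_Icc_self hs)) i
    ((mul_nonneg (by positivity) (exp_pos _).le).trans_lt hzs)
  exact mul_nonpos_of_nonneg_of_nonpos (exp_pos _).le (by nlinarith)

theorem nonpos_of_cooperative {ι : Type*} {z z' : ι → ℝ → ℝ} {a b K C : ℝ} (hK : 0 ≤ K)
    (hz : ∀ i, ContinuousOn (z i) (Icc a b))
    (hz' : ∀ i, ∀ t ∈ Ioo a b, HasDerivAt (z i) (z' i t) t)
    (hC : ∀ i, ∀ t ∈ Icc a b, z i t ≤ C)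
    (hcoop : ∀ t ∈ Ioo a b, ∀ m, (∀ k, z k t ≤ m) → ∀ i, 0 < z i t → z' i t ≤ K * m)
    (ha : ∀ i, z i a ≤ 0) : ∀ i, ∀ t ∈ Icc a b, z i t ≤ 0 := by
  set M₀ := max C 0 * exp (-(2 * K) * a)
  have hM₀ : ∀ i, ∀ t ∈ Icc a b, z i t ≤ M₀ * exp (2 * K * t) := fun i t ht => by
    have : 1 ≤ exp (-(2 * K) * a) * exp (2 * K * t) := by
      rw [← exp_add]; exact one_le_exp (by nlinarith [ht.1])
    calc z i t ≤ max C 0 * 1 := by rw [mul_one]; exact (hC i t ht).trans (le_max_left _ _)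
      _ ≤ M₀ * exp (2 * K * t) := by
        rw [mul_assoc]; exact mul_le_mul_of_nonneg_left this (le_max_right _ _)
  have hiter : ∀ n : ℕ, ∀ i, ∀ t ∈ Icc a b, z i t ≤ M₀ * (1 / 2) ^ n * exp (2 * K * t) := by
    intro n
    induction n with
    | zero => simpa using hM₀
    | succ n ih =>
      intro i t ht
      have := le_half_mul_exp_of_cooperative hK (by positivity) hz hz' hcoop ha ih i t ht
      rw [pow_succ]; linarith
  intro i t ht
  have hlim : Tendsto (fun n : ℕ => M₀ * (1 / 2) ^ n * exp (2 * K * t)) atTop (𝓝 0) := by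
    simpa using ((tendsto_pow_atTop_nhds_zero_of_lt_one (r := (1 / 2 : ℝ)) (by norm_num)
      (by norm_num)).const_mul M₀).mul_const (exp (2 * K * t))
  exact ge_of_tendsto' hlim fun n => hiter n i t ht

theorem pos_of_deriv_add_mul_ge {u u' g : ℝ → ℝ} {a b c : ℝ} (hab : a < b)
    (hu : ContinuousOn u (Icc a b)) (hu' : ∀ x ∈ Ioo a b, HasDerivAt u (u' x) x)
    (hg : ∀ x ∈ Ioo a b, 0 ≤ g x ∧ g x ≤ u' x + c * u x) (ha : 0 ≤ u a)
    (hpos : 0 < u a ∨ ∀ x ∈ Ioo a b, 0 < g x) : 0 < u b := by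
  suffices 0 < exp (c * b) * u b from pos_of_mul_pos_right this (exp_pos _).le
  have hcont := (continuous_exp.comp (continuous_const_mul c)).continuousOn.mul hu
  have hderiv : ∀ x ∈ interior (Icc a b), HasDerivWithinAt (fun x => exp (c * x) * u x)
      (exp (c * x) * (u' x + c * u x)) (interior (Icc a b)) x := by
    rw [interior_Icc]
    exact fun x hx => (hu' x hx).exp_mul_mul.hasDerivWithinAt
  rw [interior_Icc] at hderiv
  rcases hpos with ha' | hg'
  · refine (mul_pos (exp_pos (c * a)) ha').trans_le ?_
    refine monotoneOn_of_hasDerivWithinAt_nonneg (convex_Icc a b) hcont (by rwa [interior_Icc])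
      ?_ (left_mem_Icc.2 hab.le) (right_mem_Icc.2 hab.le) hab.le
    rw [interior_Icc]
    exact fun x hx => mul_nonneg (exp_pos _).le ((hg x hx).1.trans (hg x hx).2)
  · refine (mul_nonneg (exp_pos (c * a)).le ha).trans_lt ?_
    refine strictMonoOn_of_hasDerivWithinAt_pos (convex_Icc a b) hcont (by rwa [interior_Icc])
      ?_ (left_mem_Icc.2 hab.le) (right_mem_Icc.2 hab.le) hab
    rw [interior_Icc]
    exact fun x hx => mul_pos (exp_pos _) ((hg' x hx).trans_le (hg x hx).2)

section AsymptoticSystem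

variable {α β : ℝ} {f : ℝ → ℝ} {V P Vlo Vhi Plo Phi : ℤ → ℝ → ℝ}

theorem AsympReg.continuousOn (h : AsympReg V P) (j : ℤ) (T : ℝ) :
    ContinuousOn (V j) (Icc 0 T) ∧ ContinuousOn (P j) (Icc 0 T) :=
  ⟨(h j).1.continuousOn.mono Icc_subset_Ici_self, (h j).2.continuousOn.mono Icc_subset_Ici_self⟩

theorem AsympReg.hasDerivAt (h : AsympReg V P) (j : ℤ) {t : ℝ} (ht : 0 < t) :
    HasDerivAt (V j) (deriv (V j) t) t ∧ HasDerivAt (P j) (deriv (P j) t) t :=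
  ⟨(((h j).1.differentiableOn one_ne_zero).differentiableAt (Ici_mem_nhds ht)).hasDerivAt,
    (((h j).2.differentiableOn one_ne_zero).differentiableAt (Ici_mem_nhds ht)).hasDerivAt⟩

theorem exists_lipschitz_of_asympLocBdd (hf : ContDiff ℝ 1 f)
    (hlo : AsympLocBdd Vlo Plo) (hhi : AsympLocBdd Vhi Phi) {T : ℝ} (hT : 0 < T) :
    ∃ L : ℝ, 0 ≤ L ∧ ∀ j, ∀ t ∈ Icc 0 T,
      |f (Plo j t) - f (Phi j t)| ≤ L * |Plo j t - Phi j t| := by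
  obtain ⟨C₁, hC₁⟩ := hlo T hT
  obtain ⟨C₂, hC₂⟩ := hhi T hT
  obtain ⟨L, hL⟩ := hf.contDiffOn.exists_lipschitzOnWith one_ne_zero
    (convex_Icc (-max C₁ C₂) (max C₁ C₂)) isCompact_Icc
  refine ⟨L, L.2, fun j t ht => ?_⟩
  have hlo := abs_le.1 ((hC₁ j t ht).2.trans (le_max_left C₁ C₂))
  have hhi := abs_le.1 ((hC₂ j t ht).2.trans (le_max_right C₁ C₂))
  simpa only [Real.dist_eq] using hL.dist_le_mul _ hlo _ hhi

theorem deriv_sub_deriv_V_le (hsub : AsympSubSolution α β f Vlo Plo)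
    (hsup : AsympSuperSolution α β f Vhi Phi) (j : ℤ) {t : ℝ} (ht : 0 < t) :
    deriv (Vlo j) t - deriv (Vhi j) t ≤ -(2 * α) * (Vlo j t - Vhi j t)
      + β * ((Plo j t - Phi j t) + (Plo (j + 1) t - Phi (j + 1) t)) := by
  linarith [(hsub.2 j t ht).1, (hsup.2 j t ht).1]

theorem deriv_sub_deriv_P_le (hsub : AsympSubSolution α β f Vlo Plo)
    (hsup : AsympSuperSolution α β f Vhi Phi) (j : ℤ) {t : ℝ} (ht : 0 < t) :
    deriv (Plo j) t - deriv (Phi j) t ≤ (f (Plo j t) - f (Phi j t))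
      + α * ((Vlo j t - Vhi j t) + (Vlo (j - 1) t - Vhi (j - 1) t))
      - 2 * β * (Plo j t - Phi j t) := by
  linarith [(hsub.2 j t ht).2, (hsup.2 j t ht).2]

def asympGap (Vlo Vhi Plo Phi : ℤ → ℝ → ℝ) : ℤ ⊕ ℤ → ℝ → ℝ :=
  Sum.elim (fun j t => Vlo j t - Vhi j t) (fun j t => Plo j t - Phi j t)

theorem continuousOn_asympGap (hlo : AsympReg Vlo Plo) (hhi : AsympReg Vhi Phi)
    (i : ℤ ⊕ ℤ) (T : ℝ) : ContinuousOn (asympGap Vlo Vhi Plo Phi i) (Icc 0 T) := by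
  rcases i with j | j
  · exact (hlo.continuousOn j T).1.sub (hhi.continuousOn j T).1
  · exact (hlo.continuousOn j T).2.sub (hhi.continuousOn j T).2

theorem hasDerivAt_asympGap (hlo : AsympReg Vlo Plo) (hhi : AsympReg Vhi Phi)
    (i : ℤ ⊕ ℤ) {t : ℝ} (ht : 0 < t) :
    HasDerivAt (asympGap Vlo Vhi Plo Phi i) (asympGap (fun j => deriv (Vlo j))
      (fun j => deriv (Vhi j)) (fun j => deriv (Plo j)) (fun j => deriv (Phi j)) i t) t := by
  rcases i with j | j
  · exact (hlo.hasDerivAt j ht).1.sub (hhi.hasDerivAt j ht).1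
  · exact (hlo.hasDerivAt j ht).2.sub (hhi.hasDerivAt j ht).2

theorem asympGap_le (hlo : AsympLocBdd Vlo Plo) (hhi : AsympLocBdd Vhi Phi) {T : ℝ}
    (hT : 0 < T) : ∃ C, ∀ i, ∀ t ∈ Icc 0 T, asympGap Vlo Vhi Plo Phi i t ≤ C := by
  obtain ⟨C₁, hC₁⟩ := hlo T hT
  obtain ⟨C₂, hC₂⟩ := hhi T hT
  refine ⟨C₁ + C₂, fun i t ht => ?_⟩
  rcases i with j | j
  · exact (le_abs_self _).trans ((abs_sub _ _).trans (add_le_add (hC₁ j t ht).1 (hC₂ j t ht).1))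
  · exact (le_abs_self _).trans ((abs_sub _ _).trans (add_le_add (hC₁ j t ht).2 (hC₂ j t ht).2))

theorem deriv_asympGap_le (hα : 0 ≤ α) (hβ : 0 ≤ β)
    (hsub : AsympSubSolution α β f Vlo Plo) (hsup : AsympSuperSolution α β f Vhi Phi)
    {L t m : ℝ} (hL : 0 ≤ L) (ht : 0 < t)
    (hLip : ∀ j, |f (Plo j t) - f (Phi j t)| ≤ L * |Plo j t - Phi j t|)
    (hm : ∀ k, asympGap Vlo Vhi Plo Phi k t ≤ m) (i : ℤ ⊕ ℤ)
    (hi : 0 < asympGap Vlo Vhi Plo Phi i t) :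
    asympGap (fun j => deriv (Vlo j)) (fun j => deriv (Vhi j)) (fun j => deriv (Plo j))
      (fun j => deriv (Phi j)) i t ≤ (2 * α + 2 * β + L) * m := by
  have hm0 : 0 ≤ m := hi.le.trans (hm i)
  rcases i with j | j
  · have hP := hm (.inr j)
    have hP' := hm (.inr (j + 1))
    have := deriv_sub_deriv_V_le hsub hsup j ht
    simp only [asympGap, Sum.elim_inl, Sum.elim_inr] at hi hP hP' ⊢
    nlinarith
  · have hV := hm (.inl j)
    have hV' := hm (.inl (j - 1))
    have hPm := hm (.inr j)
    have := deriv_sub_deriv_P_le hsub hsup j ht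
    have hfL := (le_abs_self _).trans (hLip j)
    simp only [asympGap, Sum.elim_inl, Sum.elim_inr] at hi hV hV' hPm ⊢
    rw [abs_of_pos hi] at hfL
    nlinarith

theorem asymp_weak_comparison (hα : 0 ≤ α) (hβ : 0 ≤ β) (hf : ContDiff ℝ 1 f)
    (hsub : AsympSubSolution α β f Vlo Plo) (hsup : AsympSuperSolution α β f Vhi Phi)
    (hloclo : AsympLocBdd Vlo Plo) (hlochi : AsympLocBdd Vhi Phi)
    (hinit : ∀ j, Vlo j 0 ≤ Vhi j 0 ∧ Plo j 0 ≤ Phi j 0) (j : ℤ) {T : ℝ} (hT : 0 ≤ T) :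
    Vlo j T ≤ Vhi j T ∧ Plo j T ≤ Phi j T := by
  rcases hT.eq_or_lt with rfl | hT
  · exact hinit j
  obtain ⟨L, hL, hLip⟩ := exists_lipschitz_of_asympLocBdd hf hloclo hlochi hT
  obtain ⟨C, hC⟩ := asympGap_le hloclo hlochi hT
  have key := nonpos_of_cooperative (by positivity) (continuousOn_asympGap hsub.1 hsup.1 · T)
    (fun i t ht => hasDerivAt_asympGap hsub.1 hsup.1 i ht.1) hC
    (fun t ht _ hm => deriv_asympGap_le hα hβ hsub hsup hL ht.1
      (fun j => hLip j t (Ioo_subset_Icc_self ht)) hm) (by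
    rintro (i | i)
    · exact sub_nonpos.2 (hinit i).1
    · exact sub_nonpos.2 (hinit i).2)
  exact ⟨sub_nonpos.1 (key (.inl j) T ⟨hT.le, le_rfl⟩),
    sub_nonpos.1 (key (.inr j) T ⟨hT.le, le_rfl⟩)⟩

theorem Vlo_lt_Vhi_of (hβ : 0 < β)
    (hsub : AsympSubSolution α β f Vlo Plo) (hsup : AsympSuperSolution α β f Vhi Phi)
    (hle : ∀ j, ∀ t, 0 ≤ t → Vlo j t ≤ Vhi j t ∧ Plo j t ≤ Phi j t) (j : ℤ)
    (h : Vlo j 0 < Vhi j 0 ∨ (∀ t, 0 < t → Plo j t < Phi j t) ∨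
      ∀ t, 0 < t → Plo (j + 1) t < Phi (j + 1) t) :
    ∀ t, 0 < t → Vlo j t < Vhi j t := by
  intro t ht
  have hu := (hsup.1.continuousOn j t).1.sub (hsub.1.continuousOn j t).1
  have hu' : ∀ s ∈ Ioo 0 t, HasDerivAt (fun s => Vhi j s - Vlo j s)
      (deriv (Vhi j) s - deriv (Vlo j) s) s := fun s hs =>
    (hsup.1.hasDerivAt j hs.1).1.sub (hsub.1.hasDerivAt j hs.1).1
  have hlow : ∀ s ∈ Ioo 0 t, β * ((Phi j s - Plo j s) + (Phi (j + 1) s - Plo (j + 1) s)) ≤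
      (deriv (Vhi j) s - deriv (Vlo j) s) + 2 * α * (Vhi j s - Vlo j s) := fun s hs => by
    linarith [deriv_sub_deriv_V_le hsub hsup j hs.1]
  have hQ : ∀ i, ∀ s ∈ Ioo 0 t, 0 ≤ Phi i s - Plo i s := fun i s hs =>
    sub_nonneg.2 (hle i s hs.1.le).2
  refine sub_pos.1 (pos_of_deriv_add_mul_ge (u := fun s => Vhi j s - Vlo j s) ht hu hu'
    (fun s hs => ⟨mul_nonneg hβ.le (add_nonneg (hQ j s hs) (hQ (j + 1) s hs)), hlow s hs⟩)
    (sub_nonneg.2 (hle j 0 le_rfl).1) ?_)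
  rcases h with h0 | hQj | hQj
  · exact .inl (sub_pos.2 h0)
  · exact .inr fun s hs =>
      mul_pos hβ (add_pos_of_pos_of_nonneg (sub_pos.2 (hQj s hs.1)) (hQ (j + 1) s hs))
  · exact .inr fun s hs =>
      mul_pos hβ (add_pos_of_nonneg_of_pos (hQ j s hs) (sub_pos.2 (hQj s hs.1)))

theorem Plo_lt_Phi_of (hα : 0 < α) (hf : ContDiff ℝ 1 f)
    (hsub : AsympSubSolution α β f Vlo Plo) (hsup : AsympSuperSolution α β f Vhi Phi)
    (hloclo : AsympLocBdd Vlo Plo) (hlochi : AsympLocBdd Vhi Phi)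
    (hle : ∀ j, ∀ t, 0 ≤ t → Vlo j t ≤ Vhi j t ∧ Plo j t ≤ Phi j t) (j : ℤ)
    (h : Plo j 0 < Phi j 0 ∨ (∀ t, 0 < t → Vlo j t < Vhi j t) ∨
      ∀ t, 0 < t → Vlo (j - 1) t < Vhi (j - 1) t) :
    ∀ t, 0 < t → Plo j t < Phi j t := by
  intro t ht
  obtain ⟨L, -, hLip⟩ := exists_lipschitz_of_asympLocBdd hf hloclo hlochi ht
  have hu := (hsup.1.continuousOn j t).2.sub (hsub.1.continuousOn j t).2
  have hu' : ∀ s ∈ Ioo 0 t, HasDerivAt (fun s => Phi j s - Plo j s)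
      (deriv (Phi j) s - deriv (Plo j) s) s := fun s hs =>
    (hsup.1.hasDerivAt j hs.1).2.sub (hsub.1.hasDerivAt j hs.1).2
  have hlow : ∀ s ∈ Ioo 0 t, α * ((Vhi j s - Vlo j s) + (Vhi (j - 1) s - Vlo (j - 1) s)) ≤
      (deriv (Phi j) s - deriv (Plo j) s) + (L + 2 * β) * (Phi j s - Plo j s) := fun s hs => by
    have hfL := (le_abs_self _).trans (hLip j s (Ioo_subset_Icc_self hs))
    rw [abs_sub_comm (Plo j s), abs_of_nonneg (sub_nonneg.2 (hle j s hs.1.le).2)] at hfL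
    linarith [deriv_sub_deriv_P_le hsub hsup j hs.1]
  have hW : ∀ i, ∀ s ∈ Ioo 0 t, 0 ≤ Vhi i s - Vlo i s := fun i s hs =>
    sub_nonneg.2 (hle i s hs.1.le).1
  refine sub_pos.1 (pos_of_deriv_add_mul_ge (u := fun s => Phi j s - Plo j s) ht hu hu'
    (fun s hs => ⟨mul_nonneg hα.le (add_nonneg (hW j s hs) (hW (j - 1) s hs)), hlow s hs⟩)
    (sub_nonneg.2 (hle j 0 le_rfl).2) ?_)
  rcases h with h0 | hWj | hWj
  · exact .inl (sub_pos.2 h0)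
  · exact .inr fun s hs =>
      mul_pos hα (add_pos_of_pos_of_nonneg (sub_pos.2 (hWj s hs.1)) (hW (j - 1) s hs))
  · exact .inr fun s hs =>
      mul_pos hα (add_pos_of_nonneg_of_pos (hW j s hs) (sub_pos.2 (hWj s hs.1)))

theorem asymp_strict_comparison (hα : 0 < α) (hβ : 0 < β) (hf : ContDiff ℝ 1 f)
    (hsub : AsympSubSolution α β f Vlo Plo) (hsup : AsympSuperSolution α β f Vhi Phi)
    (hloclo : AsympLocBdd Vlo Plo) (hlochi : AsympLocBdd Vhi Phi)
    (hle : ∀ j, ∀ t, 0 ≤ t → Vlo j t ≤ Vhi j t ∧ Plo j t ≤ Phi j t)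
    (hne : (∃ j, Vlo j 0 ≠ Vhi j 0) ∨ (∃ j, Plo j 0 ≠ Phi j 0)) :
    ∀ j, ∀ t, 0 < t → Vlo j t < Vhi j t ∧ Plo j t < Phi j t := by
  have hV := Vlo_lt_Vhi_of hβ hsub hsup hle
  have hP := Plo_lt_Phi_of hα hf hsub hsup hloclo hlochi hle
  obtain ⟨k, hk⟩ : ∃ k, ∀ t, 0 < t → Vlo k t < Vhi k t := by
    rcases hne with ⟨k, hk⟩ | ⟨k, hk⟩
    · exact ⟨k, hV k (.inl ((hle k 0 le_rfl).1.lt_of_ne hk))⟩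
    · exact ⟨k, hV k (.inr (.inl (hP k (.inl ((hle k 0 le_rfl).2.lt_of_ne hk)))))⟩
  -- the `V`-gap at `i` opens the `P`-gaps at `i` and `i + 1`, and these the `V`-gaps at `i ± 1`
  have hVall : ∀ j, ∀ t, 0 < t → Vlo j t < Vhi j t := fun j => by
    refine Int.inductionOn' j k hk (fun i _ ih => ?_) (fun i _ ih => ?_)
    · refine hV (i + 1) (.inr (.inl (hP (i + 1) (.inr (.inr ?_)))))
      rwa [add_sub_cancel_right]
    · refine hV (i - 1) (.inr (.inr ?_))
      rw [sub_add_cancel]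
      exact hP i (.inr (.inl ih))
  exact fun j t ht => ⟨hVall j t ht, hP j (.inr (.inl (hVall j))) t ht⟩

end AsymptoticSystem

theorem asymptotic_comparison_principle_general
    (α β : ℝ) (hα : 0 < α) (hβ : 0 < β)
    (f : ℝ → ℝ) (hf : ContDiff ℝ 1 f)
    (Vlo Vhi Plo Phi : ℤ → ℝ → ℝ)
    (hsub : AsympSubSolution α β f Vlo Plo)
    (hsup : AsympSuperSolution α β f Vhi Phi)
    (hloclo : AsympLocBdd Vlo Plo) (hlochi : AsympLocBdd Vhi Phi)
    (hinit : ∀ j, Vlo j 0 ≤ Vhi j 0 ∧ Plo j 0 ≤ Phi j 0) :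
    (∀ j, ∀ t : ℝ, 0 < t → Vlo j t ≤ Vhi j t ∧ Plo j t ≤ Phi j t) ∧
    (((∃ j, Vlo j 0 ≠ Vhi j 0) ∨ (∃ j, Plo j 0 ≠ Phi j 0)) →
      ∀ j, ∀ t : ℝ, 0 < t → Vlo j t < Vhi j t ∧ Plo j t < Phi j t) := by
  have hle : ∀ j, ∀ t, 0 ≤ t → Vlo j t ≤ Vhi j t ∧ Plo j t ≤ Phi j t := fun j _ ht =>
    asymp_weak_comparison hα.le hβ.le hf hsub hsup hloclo hlochi hinit j ht
  exact ⟨fun j t ht => hle j t ht.le,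
    asymp_strict_comparison hα hβ hf hsub hsup hloclo hlochi hle⟩

/-- **Comparison principle for the asymptotic system** (Proposition 6.2): an ordered pair of
sub/supersolutions at time `0` stays ordered for all positive times, strictly so if the
initial data differ somewhere. -/
theorem asymptotic_comparison_principle
    (α β : ℝ) (hα : 0 < α) (hβ : 0 < β)
    (f : ℝ → ℝ) (hf : ContDiff ℝ 1 f) (hf0 : f 0 = 0) (hf1 : f 1 = 0)
    (hfpos : ∀ u ∈ Ioo (0:ℝ) 1, 0 < f u ∧ f u ≤ deriv f 0 * u)
    (hfneg : ∀ u : ℝ, u ∉ Icc (0:ℝ) 1 → f u < 0)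
    (Vlo Vhi Plo Phi : ℤ → ℝ → ℝ)
    (hsub : AsympSubSolution α β f Vlo Plo)
    (hsup : AsympSuperSolution α β f Vhi Phi)
    (hloclo : AsympLocBdd Vlo Plo) (hlochi : AsympLocBdd Vhi Phi)
    (hinit : ∀ j, Vlo j 0 ≤ Vhi j 0 ∧ Plo j 0 ≤ Phi j 0) :
    (∀ j, ∀ t : ℝ, 0 < t → Vlo j t ≤ Vhi j t ∧ Plo j t ≤ Phi j t) ∧
    (((∃ j, Vlo j 0 ≠ Vhi j 0) ∨ (∃ j, Plo j 0 ≠ Phi j 0)) →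
      ∀ j, ∀ t : ℝ, 0 < t → Vlo j t < Vhi j t ∧ Plo j t < Phi j t) :=
  asymptotic_comparison_principle_general α β hα hβ f hf Vlo Vhi Plo Phi hsub hsup hloclo hlochi
    hinit
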